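/- Let X be a separable Banach space, Y a Banach space, G ⊆ X open, and f : G → Y a pointwise Lipschitz mapping. Then there exists a σ-directionally porous set A ⊆ G such that for every x ∈ G \ A, the set U_x of directions u ∈ X in which f'₊(x,u) exists is a closed linear subspace of X, and u ↦ f'₊(x,u) is linear on U_x. -/

import Mathlib

open Filter Topology Set Metric

section Defs
variable {X Y : Type*} [NormedAddCommGroup X] [NormedSpace ℝ X]
  [NormedAddCommGroup Y] [NormedSpace ℝ Y]

/-- One-sided directional derivative: `f'₊(x,v) = L`. -/
def HasPosDirDeriv (f : X → Y) (x v : X) (L : Y) : Prop :=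
  Tendsto (fun t : ℝ => t⁻¹ • (f (x + t • v) - f x)) (𝓝[>] (0:ℝ)) (𝓝 L)

/-- Two-sided directional derivative: `f'(x,v) = L`. -/
def HasDirDeriv (f : X → Y) (x v : X) (L : Y) : Prop :=
  Tendsto (fun t : ℝ => t⁻¹ • (f (x + t • v) - f x)) (𝓝[≠] (0:ℝ)) (𝓝 L)

/-- One-sided Hadamard directional derivative: `f'_{H+}(x,v) = L`. -/
def HasHadamardPosDirDeriv (f : X → Y) (x v : X) (L : Y) : Prop :=
  Tendsto (fun p : X × ℝ => p.2⁻¹ • (f (x + p.2 • p.1) - f x))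
    ((𝓝 v) ×ˢ (𝓝[>] (0:ℝ))) (𝓝 L)

/-- Two-sided Hadamard directional derivative: `f'_H(x,v) = L`. -/
def HasHadamardDirDeriv (f : X → Y) (x v : X) (L : Y) : Prop :=
  Tendsto (fun p : X × ℝ => p.2⁻¹ • (f (x + p.2 • p.1) - f x))
    ((𝓝 v) ×ˢ (𝓝[≠] (0:ℝ))) (𝓝 L)

/-- `f` is Lipschitz at the point `x`: `limsup_{y→x} ‖f y - f x‖/‖y-x‖ < ∞`. -/
def LipschitzAtPt (f : X → Y) (x : X) : Prop :=
  ∃ K δ : ℝ, 0 < δ ∧ ∀ y, ‖y - x‖ < δ → ‖f y - f x‖ ≤ K * ‖y - x‖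

/-- `A` is porous at `x` in the direction `v`. -/
def PorousAt (A : Set X) (x v : X) : Prop :=
  ∃ p > (0:ℝ), ∃ t : ℕ → ℝ, (∀ n, 0 < t n) ∧ Tendsto t atTop (𝓝 0) ∧
    ∀ n, ball (x + t n • v) (p * t n) ∩ A = ∅

/-- `A` is directionally porous. -/
def DirectionallyPorous (A : Set X) : Prop :=
  ∀ x ∈ A, ∃ v : X, v ≠ 0 ∧ PorousAt A x v

/-- `A` is σ-directionally porous. -/
def SigmaDirectionallyPorous (A : Set X) : Prop :=
  ∃ s : ℕ → Set X, (∀ n, DirectionallyPorous (s n)) ∧ A = ⋃ n, s n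

/-- The open cone `C(x,v,δ)`. -/
def Cone (x v : X) (δ : ℝ) : Set X :=
  {y : X | y ≠ x ∧ ‖v - ‖y - x‖⁻¹ • (y - x)‖ < δ}

/-- `f` is Hadamard differentiable at `x` with derivative `L`: the difference quotients
converge to `L v` uniformly in `v` from each compact set. -/
def HadamardDifferentiableAt (f : X → Y) (x : X) (L : X →L[ℝ] Y) : Prop :=
  ∀ C : Set X, IsCompact C →
    TendstoUniformlyOn (fun (t : ℝ) (v : X) => t⁻¹ • (f (x + t • v) - f x))
      (fun v => L v) (𝓝[≠] (0:ℝ)) C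

end Defs

/-!
Fix rational `c, δ₀` with `‖f z - f x‖ ≤ c * ‖z - x‖` for `‖z - x‖ < δ₀`. Each way in which the
one-sided derivatives at `x` can misbehave is witnessed along a sequence `t → 0⁺`, and no point `y`
close to `x + t • p` can share the quantitative data of `x`: the Lipschitz bound and a cone estimate
at `y` would carry the good behaviour from `y` back to `x`. So the points with given rational data
form a set porous in direction `p`. Three misbehaviours are excluded this way: a derivative along `v`
that is not uniform on a cone around `v` (for `y ≈ x + t • v`, `f (x + t • w) ≈ f y ≈ f (x + t • v)`),
non-additivity (`y ≈ x + t • u` reaches `x + t • (u + v)` along `v`), and `f'₊(x, -u) ≠ -f'₊(x, u)`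
(`y ≈ x - t • u` reaches `x` along `u`). Off these countably many sets the derivatives form the graph
of a linear map bounded by `c`, and the cone estimate, uniform in the direction, makes its domain
closed.
-/

section Lipschitz
variable {X Y : Type*} [NormedAddCommGroup X] [NormedAddCommGroup Y] {f : X → Y} {x : X}

lemma LipschitzAtPt.continuousAt (h : LipschitzAtPt f x) : ContinuousAt f x := by
  obtain ⟨K, δ, hδ, hK⟩ := h
  rw [ContinuousAt, tendsto_iff_norm_sub_tendsto_zero]
  refine squeeze_zero' (Eventually.of_forall fun _ => norm_nonneg _) ?_
    (by simpa using ((tendsto_id.sub_const x).norm.const_mul K : Tendsto _ (𝓝 x) _))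
  filter_upwards [ball_mem_nhds x hδ] with y hy using hK y (by rwa [mem_ball, dist_eq_norm] at hy)

def LipschitzAtWith (f : X → Y) (x : X) (c δ : ℝ) : Prop :=
  ∀ z, ‖z - x‖ < δ → ‖f z - f x‖ ≤ c * ‖z - x‖

lemma LipschitzAtWith.norm_sub_le {c δ r : ℝ} {z : X} (h : LipschitzAtWith f x c δ) (hc : 0 ≤ c)
    (hz : ‖z - x‖ ≤ r) (hr : r < δ) : ‖f z - f x‖ ≤ c * r :=
  (h z (hz.trans_lt hr)).trans (mul_le_mul_of_nonneg_left hz hc)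

lemma LipschitzAtPt.exists_rat (h : LipschitzAtPt f x) :
    ∃ c δ : ℚ, 0 ≤ (c:ℝ) ∧ 0 < (δ:ℝ) ∧ LipschitzAtWith f x c δ := by
  obtain ⟨K, δ, hδ, hK⟩ := h
  obtain ⟨c, hc⟩ := exists_rat_gt (max K 0)
  obtain ⟨δ', hδ'0, hδ'⟩ := exists_rat_btwn hδ
  refine ⟨c, δ', (le_max_right _ _).trans hc.le, hδ'0, fun z hz => (hK z (hz.trans hδ')).trans ?_⟩
  exact mul_le_mul_of_nonneg_right ((le_max_left _ _).trans hc.le) (norm_nonneg _)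

end Lipschitz

section Basic
variable {X Y : Type*} [NormedAddCommGroup X] [NormedSpace ℝ X]
  [NormedAddCommGroup Y] [NormedSpace ℝ Y]

lemma norm_inv_smul_sub_le_iff {t ε : ℝ} (ht : 0 < t) (A L : Y) :
    ‖t⁻¹ • A - L‖ ≤ ε ↔ ‖A - t • L‖ ≤ ε * t := by
  rw [show t⁻¹ • A - L = t⁻¹ • (A - t • L) by rw [smul_sub, inv_smul_smul₀ ht.ne'], norm_smul,
    Real.norm_of_nonneg (inv_nonneg.2 ht.le), inv_mul_le_iff₀ ht, mul_comm]

lemma norm_sub_smul_le_add {t : ℝ} (ht : 0 ≤ t) (A L L' : Y) :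
    ‖A - t • L'‖ ≤ ‖A - t • L‖ + t * ‖L - L'‖ := by
  calc ‖A - t • L'‖ = ‖(A - t • L) + t • (L - L')‖ := by rw [smul_sub]; abel_nf
    _ ≤ ‖A - t • L‖ + t * ‖L - L'‖ := by
      grw [norm_add_le, norm_smul, Real.norm_of_nonneg ht]

lemma eventually_pos_mul_lt (a : ℝ) {b : ℝ} (hb : 0 < b) :
    ∀ᶠ t in 𝓝[>] (0:ℝ), 0 < t ∧ a * t < b :=
  Filter.Eventually.and self_mem_nhdsWithin <| nhdsWithin_le_nhds <|
    ((continuous_const_mul a).tendsto 0).eventually_lt_const (by simpa using hb)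

lemma exists_rat_forall_Ioo_of_eventually {P : ℝ → Prop} (h : ∀ᶠ t in 𝓝[>] (0:ℝ), P t) :
    ∃ δ : ℚ, 0 < (δ:ℝ) ∧ ∀ t ∈ Ioo 0 (δ:ℝ), P t := by
  obtain ⟨u, hu, hP⟩ := mem_nhdsGT_iff_exists_Ioo_subset.1 h
  obtain ⟨δ, hδ, hδu⟩ := exists_pos_rat_lt (show 0 < u from hu)
  exact ⟨δ, Rat.cast_pos.2 hδ, fun t ht => hP ⟨ht.1, ht.2.trans hδu⟩⟩

lemma exists_rat_pos_le_mul_le {c ε r : ℝ} (hc : 0 ≤ c) (hε : 0 < ε) (hr : 0 < r) :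
    ∃ ρ : ℚ, 0 < (ρ:ℝ) ∧ (ρ:ℝ) ≤ r ∧ c * ρ ≤ ε := by
  obtain ⟨ρ, hρ0, hρ⟩ := exists_rat_btwn (lt_min hr (div_pos hε (by linarith : 0 < c + 1)))
  refine ⟨ρ, hρ0, hρ.le.trans (min_le_left _ _), ?_⟩
  have := (lt_div_iff₀ (by linarith : 0 < c + 1)).1 (hρ.trans_le (min_le_right _ _))
  nlinarith

variable {f : X → Y} {x u v : X} {L M : Y}

lemma hasPosDirDeriv_iff :
    HasPosDirDeriv f x v L ↔
      ∀ ε > 0, ∀ᶠ t in 𝓝[>] (0:ℝ), ‖f (x + t • v) - f x - t • L‖ ≤ ε * t := by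
  rw [HasPosDirDeriv, nhds_basis_closedBall.tendsto_right_iff]
  refine forall₂_congr fun ε _ => eventually_congr ?_
  filter_upwards [self_mem_nhdsWithin] with t ht
  rw [mem_closedBall, dist_eq_norm, norm_inv_smul_sub_le_iff ht]

lemma hasPosDirDeriv_zero : HasPosDirDeriv f x 0 0 := by
  simp [HasPosDirDeriv]

lemma HasPosDirDeriv.unique (h : HasPosDirDeriv f x v L) (h' : HasPosDirDeriv f x v M) : L = M :=
  tendsto_nhds_unique h h'

lemma HasPosDirDeriv.smul_of_pos {c : ℝ} (hc : 0 < c) (h : HasPosDirDeriv f x v L) :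
    HasPosDirDeriv f x (c • v) (c • L) := by
  rw [hasPosDirDeriv_iff] at h ⊢
  intro ε hε
  have hmul : Tendsto (c * ·) (𝓝[>] (0:ℝ)) (𝓝[>] 0) :=
    tendsto_nhdsWithin_of_tendsto_nhds_of_eventually_within _
      (((continuous_const_mul c).tendsto' 0 0 (mul_zero c)).mono_left nhdsWithin_le_nhds)
      (eventually_mem_nhdsWithin.mono fun t (ht : 0 < t) => mul_pos hc ht)
  filter_upwards [hmul.eventually (h (ε / c) (div_pos hε hc)), self_mem_nhdsWithin] with t ht ht0
  rw [smul_smul, mul_comm t c, smul_comm t c L, smul_smul]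
  calc _ ≤ ε / c * (c * t) := ht
    _ = ε * t := by field_simp

/-- `Y` need not be separable, but the values of `f` on a dense sequence, combined by rational
difference quotients, approximate every one-sided directional derivative. -/
lemma HasPosDirDeriv.mem_closure_range {G : Set X} {dX : ℕ → X} (hG : IsOpen G) (hx : x ∈ G)
    (hf : ∀ z ∈ G, ContinuousAt f z) (hdX : DenseRange dX) (h : HasPosDirDeriv f x v L) :
    L ∈ closure (range fun p : ℚ × ℕ × ℕ => (p.1 : ℝ) • (f (dX p.2.1) - f (dX p.2.2))) := by
  have hval : ∀ z ∈ G, f z ∈ closure (range (f ∘ dX)) := fun z hz => by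
    rw [range_comp]
    exact mem_closure_image (hf z hz) (hdX.closure_eq ▸ mem_univ z)
  have hray : Tendsto (fun t : ℝ => x + t • v) (𝓝[>] 0) (𝓝 x) :=
    ((continuous_const.add (continuous_id.smul continuous_const)).tendsto' 0 x
      (by simp)).mono_left nhdsWithin_le_nhds
  refine isClosed_closure.mem_of_tendsto h ((hray.eventually (hG.mem_nhds hx)).mono fun t ht => ?_)
  have hsub : f (x + t • v) - f x ∈ closure (range fun p : ℕ × ℕ => f (dX p.1) - f (dX p.2)) :=
    map_mem_closure₂ continuous_sub (hval _ ht) (hval x hx)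
      (by rintro _ ⟨n, rfl⟩ _ ⟨m, rfl⟩; exact ⟨(n, m), rfl⟩)
  exact map_mem_closure₂ continuous_smul (Rat.denseRange_cast t⁻¹) hsub
    (by rintro _ ⟨q, rfl⟩ _ ⟨⟨n, m⟩, rfl⟩; exact ⟨(q, n, m), rfl⟩)

lemma HasPosDirDeriv.norm_le {c δ : ℝ} (hLip : LipschitzAtWith f x c δ) (hδ : 0 < δ)
    (h : HasPosDirDeriv f x v L) : ‖L‖ ≤ c * ‖v‖ := by
  refine le_of_tendsto h.norm ?_
  filter_upwards [eventually_pos_mul_lt ‖v‖ hδ] with t ⟨ht, htδ⟩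
  have hstep : ‖x + t • v - x‖ = t * ‖v‖ := by
    rw [add_sub_cancel_left, norm_smul, Real.norm_of_nonneg ht.le]
  rw [norm_smul, Real.norm_of_nonneg (inv_nonneg.2 ht.le), inv_mul_le_iff₀ ht]
  calc ‖f (x + t • v) - f x‖ ≤ c * (t * ‖v‖) := hstep ▸ hLip _ (by rwa [hstep, mul_comm])
    _ = t * (c * ‖v‖) := by ring

end Basic

section Porosity
variable {X : Type*} [NormedAddCommGroup X] [NormedSpace ℝ X] {A : Set X}

lemma directionallyPorous_of_frequently
    (h : ∀ x ∈ A, ∃ v : X, ∃ p > (0:ℝ),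
      ∃ᶠ t in 𝓝[>] (0:ℝ), ∀ y ∈ ball (x + t • v) (p * t), y ∉ A) :
    DirectionallyPorous A := by
  intro x hx
  obtain ⟨v, p, hp, hfreq⟩ := h x hx
  obtain ⟨t, htlim, ht⟩ :=
    exists_seq_forall_of_frequently (hfreq.and_eventually self_mem_nhdsWithin)
  refine ⟨v, fun hv => ?_, p, hp, t, fun n => (ht n).2, htlim.mono_right nhdsWithin_le_nhds,
    fun n => eq_empty_iff_forall_notMem.2 fun y hy => (ht n).1 y hy.1 hy.2⟩
  exact (ht 0).1 x (by simpa [hv] using mul_pos hp (ht 0).2) hx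

lemma DirectionallyPorous.mono {S : Set X} (h : DirectionallyPorous S) (hA : A ⊆ S) :
    DirectionallyPorous A := by
  intro x hx
  obtain ⟨v, hv, p, hp, t, ht, htlim, hempty⟩ := h x (hA hx)
  exact ⟨v, hv, p, hp, t, ht, htlim, fun n => subset_empty_iff.1
    ((inter_subset_inter_right _ hA).trans (hempty n).subset)⟩

lemma SigmaDirectionallyPorous.of_subset_sUnion {𝒮 : Set (Set X)} (h𝒮 : 𝒮.Countable)
    (hp : ∀ S ∈ 𝒮, DirectionallyPorous S) (hA : A ⊆ ⋃₀ 𝒮) : SigmaDirectionallyPorous A := by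
  rcases 𝒮.eq_empty_or_nonempty with rfl | hne
  · refine ⟨fun _ => ∅, fun _ _ hx => hx.elim, ?_⟩
    simpa using hA
  · obtain ⟨S, rfl⟩ := h𝒮.exists_eq_range hne
    refine ⟨fun n => A ∩ S n, fun n => (hp _ ⟨n, rfl⟩).mono inter_subset_right, ?_⟩
    rw [← inter_iUnion, eq_comm, inter_eq_left, ← sUnion_range]
    exact hA

end Porosity

section BadSets
variable {X Y : Type*} [NormedAddCommGroup X] [NormedSpace ℝ X]
  [NormedAddCommGroup Y] [NormedSpace ℝ Y] {f : X → Y} {c δ₀ ε ρ δ : ℝ} {v : X} {L : Y}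

def ConeApprox (f : X → Y) (x v : X) (L : Y) (ρ ε δ : ℝ) : Prop :=
  ∀ t ∈ Ioo 0 δ, ∀ w ∈ closedBall v ρ, ‖f (x + t • w) - f x - t • L‖ ≤ ε * t

lemma ConeApprox.norm_sub_le {y z : X} {t : ℝ} (h : ConeApprox f y v L ρ ε δ) (ht : t ∈ Ioo 0 δ)
    (hz : ‖z - y - t • v‖ ≤ ρ * t) : ‖f z - f y - t • L‖ ≤ ε * t := by
  have ht0 : t ≠ 0 := ht.1.ne'
  have hw : t⁻¹ • (z - y) ∈ closedBall v ρ := by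
    rw [mem_closedBall, dist_eq_norm, ← inv_smul_smul₀ ht0 v, ← smul_sub, norm_smul,
      Real.norm_of_nonneg (inv_nonneg.2 ht.1.le), inv_mul_le_iff₀ ht.1, mul_comm t]
    exact hz
  simpa [smul_inv_smul₀ ht0] using h t ht _ hw

def hadamardBadSet (f : X → Y) (c δ₀ ε ρ : ℝ) : Set X :=
  {x | LipschitzAtWith f x c δ₀ ∧ ∃ v L,
    (∀ᶠ t in 𝓝[>] (0:ℝ), ‖f (x + t • v) - f x - t • L‖ ≤ ε * t) ∧
    ∃ᶠ t in 𝓝[>] (0:ℝ), ∃ w ∈ closedBall v ρ, 2 * ε * t < ‖f (x + t • w) - f x - t • L‖}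

lemma directionallyPorous_hadamardBadSet (hc : 0 ≤ c) (hδ₀ : 0 < δ₀) (hρ : 0 < ρ)
    (hcρ : 3 * c * ρ ≤ ε) : DirectionallyPorous (hadamardBadSet f c δ₀ ε ρ) := by
  refine directionallyPorous_of_frequently fun x ⟨_, v, L, hray, hfar⟩ => ⟨v, ρ, hρ, ?_⟩
  refine (hfar.and_eventually (hray.and (eventually_pos_mul_lt (2 * ρ) hδ₀))).mono ?_
  rintro t ⟨⟨w, hw, hfar⟩, hnear, ht, htδ₀⟩ y hy ⟨hyLip, -⟩
  rw [mem_ball, dist_eq_norm] at hy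
  rw [mem_closedBall, dist_eq_norm] at hw
  have h1 : ‖f (x + t • w) - f y‖ ≤ c * (2 * ρ * t) := by
    refine hyLip.norm_sub_le hc ?_ htδ₀
    calc ‖x + t • w - y‖ = ‖t • (w - v) - (y - (x + t • v))‖ := by congr 1; module
      _ ≤ t * ρ + ρ * t := by
        grw [norm_sub_le, norm_smul, Real.norm_of_nonneg ht.le, hw, hy]
      _ = 2 * ρ * t := by ring
  have h2 : ‖f (x + t • v) - f y‖ ≤ c * (ρ * t) :=
    hyLip.norm_sub_le hc (by rw [norm_sub_rev]; exact hy.le) (by nlinarith [mul_pos hρ ht])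
  have hsum : ‖f (x + t • w) - f x - t • L‖ ≤ 2 * ε * t :=
    calc ‖f (x + t • w) - f x - t • L‖
        = ‖(f (x + t • w) - f y) - (f (x + t • v) - f y) + (f (x + t • v) - f x - t • L)‖ := by
          congr 1; abel
      _ ≤ c * (2 * ρ * t) + c * (ρ * t) + ε * t := by grw [norm_add_le, norm_sub_le, h1, h2, hnear]
      _ ≤ 2 * ε * t := by nlinarith [mul_le_mul_of_nonneg_right hcρ ht.le]
  linarith

def addBadSet (f : X → Y) (c δ₀ ε ρ δ : ℝ) (v : X) (L : Y) : Set X :=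
  {x | LipschitzAtWith f x c δ₀ ∧ ConeApprox f x v L ρ ε δ ∧ ∃ u Lu,
    (∀ᶠ t in 𝓝[>] (0:ℝ), ‖f (x + t • u) - f x - t • Lu‖ ≤ ε * t) ∧
    ∃ᶠ t in 𝓝[>] (0:ℝ), 3 * ε * t < ‖f (x + t • (u + v)) - f x - t • (Lu + L)‖}

lemma directionallyPorous_addBadSet (hc : 0 ≤ c) (hδ₀ : 0 < δ₀) (hρ : 0 < ρ) (hδ : 0 < δ)
    (hcρ : c * ρ ≤ ε) : DirectionallyPorous (addBadSet f c δ₀ ε ρ δ v L) := by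
  refine directionallyPorous_of_frequently fun x ⟨_, _, u, Lu, hray, hfar⟩ => ⟨u, ρ, hρ, ?_⟩
  refine (hfar.and_eventually ((hray.and (eventually_pos_mul_lt ρ hδ₀)).and
    (Ioo_mem_nhdsGT hδ))).mono ?_
  rintro t ⟨hfar, ⟨hnear, ht, htδ₀⟩, htδ⟩ y hy ⟨hyLip, hyCone, -⟩
  rw [mem_ball, dist_eq_norm] at hy
  have h1 : ‖f (x + t • (u + v)) - f y - t • L‖ ≤ ε * t := by
    refine hyCone.norm_sub_le htδ ?_
    calc ‖x + t • (u + v) - y - t • v‖ = ‖y - (x + t • u)‖ := by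
          rw [← norm_neg]; congr 1; module
      _ ≤ ρ * t := hy.le
  have h2 : ‖f (x + t • u) - f y‖ ≤ c * (ρ * t) :=
    hyLip.norm_sub_le hc (by rw [norm_sub_rev]; exact hy.le) htδ₀
  have hsum : ‖f (x + t • (u + v)) - f x - t • (Lu + L)‖ ≤ 3 * ε * t :=
    calc ‖f (x + t • (u + v)) - f x - t • (Lu + L)‖
        = ‖(f (x + t • (u + v)) - f y - t • L) - (f (x + t • u) - f y)
            + (f (x + t • u) - f x - t • Lu)‖ := by congr 1; module
      _ ≤ ε * t + c * (ρ * t) + ε * t := by grw [norm_add_le, norm_sub_le, h1, h2, hnear]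
      _ ≤ 3 * ε * t := by nlinarith [mul_le_mul_of_nonneg_right hcρ ht.le]
  linarith

def negBadSet (f : X → Y) (c δ₀ ε ρ δ : ℝ) (v : X) (L : Y) : Set X :=
  {x | LipschitzAtWith f x c δ₀ ∧ ConeApprox f x v L (2 * ρ) ε δ ∧ ∃ u ∈ closedBall v ρ,
    ∃ᶠ t in 𝓝[>] (0:ℝ), 2 * ε * t < ‖f (x + t • -u) - f x - t • -L‖}

lemma directionallyPorous_negBadSet (hc : 0 ≤ c) (hδ₀ : 0 < δ₀) (hρ : 0 < ρ) (hδ : 0 < δ)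
    (hcρ : c * ρ ≤ ε) : DirectionallyPorous (negBadSet f c δ₀ ε ρ δ v L) := by
  refine directionallyPorous_of_frequently fun x ⟨_, _, u, hu, hfar⟩ => ⟨-u, ρ, hρ, ?_⟩
  refine (hfar.and_eventually ((eventually_pos_mul_lt ρ hδ₀).and (Ioo_mem_nhdsGT hδ))).mono ?_
  rintro t ⟨hfar, ⟨ht, htδ₀⟩, htδ⟩ y hy ⟨hyLip, hyCone, -⟩
  rw [mem_ball, dist_eq_norm] at hy
  rw [mem_closedBall, dist_eq_norm] at hu
  have h1 : ‖f x - f y - t • L‖ ≤ ε * t := by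
    refine hyCone.norm_sub_le htδ ?_
    calc ‖x - y - t • v‖ = ‖-(y - (x + t • -u)) + t • (u - v)‖ := by congr 1; module
      _ ≤ ρ * t + t * ρ := by
        grw [norm_add_le, norm_neg, norm_smul, Real.norm_of_nonneg ht.le, hy, hu]
      _ = 2 * ρ * t := by ring
  have h2 : ‖f (x + t • -u) - f y‖ ≤ c * (ρ * t) :=
    hyLip.norm_sub_le hc (by rw [norm_sub_rev]; exact hy.le) htδ₀
  have hsum : ‖f (x + t • -u) - f x - t • -L‖ ≤ 2 * ε * t :=
    calc ‖f (x + t • -u) - f x - t • -L‖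
        = ‖(f (x + t • -u) - f y) - (f x - f y - t • L)‖ := by congr 1; module
      _ ≤ c * (ρ * t) + ε * t := by grw [norm_sub_le, h1, h2]
      _ ≤ 2 * ε * t := by nlinarith [mul_le_mul_of_nonneg_right hcρ ht.le]
  linarith

def badSets (f : X → Y) (D : Set X) (E : Set Y) : Set (Set X) :=
  {S | ∃ c δ₀ ε ρ : ℚ, (0 ≤ (c:ℝ) ∧ 0 < (δ₀:ℝ) ∧ 0 < (ρ:ℝ) ∧ 3 * c * ρ ≤ (ε:ℝ)) ∧
    S = hadamardBadSet f c δ₀ ε ρ} ∪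
  {S | ∃ c δ₀ ε ρ δ : ℚ, ∃ v ∈ D, ∃ L ∈ E,
    (0 ≤ (c:ℝ) ∧ 0 < (δ₀:ℝ) ∧ 0 < (ρ:ℝ) ∧ 0 < (δ:ℝ) ∧ c * ρ ≤ (ε:ℝ)) ∧
    (S = addBadSet f c δ₀ ε ρ δ v L ∨ S = negBadSet f c δ₀ ε ρ δ v L)}

lemma countable_badSets {D : Set X} {E : Set Y} (hD : D.Countable) (hE : E.Countable) :
    (badSets f D E).Countable := by
  refine Countable.union
    ((countable_range fun p : ℚ × ℚ × ℚ × ℚ =>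
      hadamardBadSet f p.1 p.2.1 p.2.2.1 p.2.2.2).mono ?_)
    ((countable_iUnion fun p : ℚ × ℚ × ℚ × ℚ × ℚ =>
      hD.biUnion fun v _ => hE.biUnion fun L _ =>
        (toFinite {addBadSet f p.1 p.2.1 p.2.2.1 p.2.2.2.1 p.2.2.2.2 v L,
          negBadSet f p.1 p.2.1 p.2.2.1 p.2.2.2.1 p.2.2.2.2 v L}).countable).mono ?_)
  · rintro _ ⟨c, δ₀, ε, ρ, -, rfl⟩
    exact ⟨(c, δ₀, ε, ρ), rfl⟩
  · rintro _ ⟨c, δ₀, ε, ρ, δ, v, hv, L, hL, -, hS⟩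
    exact mem_iUnion.2 ⟨(c, δ₀, ε, ρ, δ), mem_biUnion hv (mem_biUnion hL hS)⟩

lemma DirectionallyPorous.of_mem_badSets {D : Set X} {E : Set Y} {S : Set X}
    (hS : S ∈ badSets f D E) : DirectionallyPorous S := by
  rcases hS with ⟨c, δ₀, ε, ρ, ⟨hc, hδ₀, hρ, hcρ⟩, rfl⟩ |
    ⟨c, δ₀, ε, ρ, δ, v, -, L, -, ⟨hc, hδ₀, hρ, hδ, hcρ⟩, rfl | rfl⟩
  · exact directionallyPorous_hadamardBadSet hc hδ₀ hρ hcρ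
  · exact directionallyPorous_addBadSet hc hδ₀ hρ hδ hcρ
  · exact directionallyPorous_negBadSet hc hδ₀ hρ hδ hcρ

end BadSets

section GoodPoints
variable {X Y : Type*} [NormedAddCommGroup X] [NormedSpace ℝ X]
  [NormedAddCommGroup Y] [NormedSpace ℝ Y] {f : X → Y} {x u v : X} {Lu Lv : Y}

lemma ConeApprox.perturb {v' : X} {L L' : Y} {ρ ρ' ε ε' δ : ℝ} (h : ConeApprox f x v L ρ ε δ)
    (hv : ‖v' - v‖ + ρ' ≤ ρ) (hL : ε + ‖L - L'‖ ≤ ε') : ConeApprox f x v' L' ρ' ε' δ := by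
  intro t ht w hw
  rw [mem_closedBall, dist_eq_norm] at hw
  have hwv : w ∈ closedBall v ρ := by
    rw [mem_closedBall, dist_eq_norm]
    calc ‖w - v‖ ≤ ‖w - v'‖ + ‖v' - v‖ := norm_sub_le_norm_sub_add_norm_sub _ _ _
      _ ≤ ρ := by linarith
  calc _ ≤ ‖f (x + t • w) - f x - t • L‖ + t * ‖L - L'‖ := norm_sub_smul_le_add ht.1.le _ _ _
    _ ≤ ε * t + t * ‖L - L'‖ := by grw [h t ht w hwv]
    _ ≤ ε' * t := by nlinarith [ht.1]

def UniformlyHadamardAt (f : X → Y) (x : X) : Prop :=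
  ∀ ε > 0, ∃ ρ > 0, ∀ v L, HasPosDirDeriv f x v L →
    ∀ᶠ t in 𝓝[>] (0:ℝ), ∀ w ∈ closedBall v ρ, ‖f (x + t • w) - f x - t • L‖ ≤ ε * t

lemma uniformlyHadamardAt_of_notMem_badSets {D : Set X} {E : Set Y} {c δ₀ : ℚ}
    (hLip : LipschitzAtWith f x c δ₀) (hc : 0 ≤ (c:ℝ)) (hδ₀ : 0 < (δ₀:ℝ))
    (hx : x ∉ ⋃₀ badSets f D E) : UniformlyHadamardAt f x := by
  intro ε hε
  obtain ⟨ε', hε'0, hε'⟩ := exists_rat_btwn (half_pos hε)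
  obtain ⟨ρ, hρ0, -, hcρ⟩ := exists_rat_pos_le_mul_le (by positivity : 0 ≤ 3 * (c:ℝ)) hε'0 one_pos
  refine ⟨ρ, hρ0, fun v L hv => ?_⟩
  by_contra hnear
  refine hx ⟨_, Or.inl ⟨c, δ₀, ε', ρ, ⟨hc, hδ₀, hρ0, hcρ⟩, rfl⟩,
    hLip, v, L, hasPosDirDeriv_iff.1 hv ε' hε'0, ?_⟩
  refine ((not_eventually.1 hnear).and_eventually self_mem_nhdsWithin).mono fun t ⟨hfar, ht⟩ => ?_
  push Not at hfar
  obtain ⟨w, hw, hlt⟩ := hfar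
  exact ⟨w, hw, lt_of_le_of_lt (by nlinarith [show 0 < t from ht]) hlt⟩

lemma HasPosDirDeriv.add_of_notMem_badSets {D : Set X} {E : Set Y} {c δ₀ : ℚ} (hD : Dense D)
    (hE : ∀ v L, HasPosDirDeriv f x v L → L ∈ closure E) (hH : UniformlyHadamardAt f x)
    (hLip : LipschitzAtWith f x c δ₀) (hc : 0 ≤ (c:ℝ)) (hδ₀ : 0 < (δ₀:ℝ))
    (hx : x ∉ ⋃₀ badSets f D E)
    (hu : HasPosDirDeriv f x u Lu) (hv : HasPosDirDeriv f x v Lv) :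
    HasPosDirDeriv f x (u + v) (Lu + Lv) := by
  rw [hasPosDirDeriv_iff]
  by_contra! ⟨ε, hε, hfar⟩
  obtain ⟨ε', hε'0, hε'⟩ := exists_rat_btwn (show 0 < ε / 4 by positivity)
  obtain ⟨ρ₁, hρ₁, hcone⟩ := hH (ε' / 2) (by positivity)
  obtain ⟨δ, hδ, hconev⟩ := exists_rat_forall_Ioo_of_eventually (hcone v Lv hv)
  obtain ⟨ρ, hρ0, hρ, hcρ⟩ := exists_rat_pos_le_mul_le hc hε'0 (half_pos hρ₁)
  obtain ⟨v', hv'D, hv'⟩ := hD.exists_dist_lt v (half_pos hρ₁)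
  obtain ⟨L', hL'E, hL'⟩ := Metric.mem_closure_iff.1 (hE v Lv hv) (ε' / 2) (by positivity)
  rw [dist_eq_norm] at hv' hL'
  refine hx ⟨_, Or.inr ⟨c, δ₀, ε', ρ, δ, v', hv'D, L', hL'E, ⟨hc, hδ₀, hρ0, hδ, hcρ⟩, Or.inl rfl⟩,
    hLip, ?_, u + (v - v'), Lu, ?_, ?_⟩
  · exact ConeApprox.perturb (ρ := ρ₁) (ε := ε' / 2) hconev
      (by rw [norm_sub_rev]; linarith) (by linarith)
  · filter_upwards [hcone u Lu hu, self_mem_nhdsWithin] with t ht ht0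
    refine (ht _ ?_).trans (by nlinarith [show (0:ℝ) < t from ht0])
    rw [mem_closedBall, dist_eq_norm, add_sub_cancel_left]
    linarith
  · rw [show u + (v - v') + v' = u + v by abel]
    refine (hfar.and_eventually self_mem_nhdsWithin).mono fun t ⟨hft, ht⟩ => ?_
    have ht : (0:ℝ) < t := ht
    have := norm_sub_smul_le_add ht.le (f (x + t • (u + v)) - f x) (Lu + L') (Lu + Lv)
    rw [add_sub_add_left_eq_sub, norm_sub_rev L'] at this
    nlinarith

lemma HasPosDirDeriv.neg_of_notMem_badSets {D : Set X} {E : Set Y} {c δ₀ : ℚ} (hD : Dense D)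
    (hE : ∀ v L, HasPosDirDeriv f x v L → L ∈ closure E) (hH : UniformlyHadamardAt f x)
    (hLip : LipschitzAtWith f x c δ₀) (hc : 0 ≤ (c:ℝ)) (hδ₀ : 0 < (δ₀:ℝ))
    (hx : x ∉ ⋃₀ badSets f D E)
    (hu : HasPosDirDeriv f x u Lu) : HasPosDirDeriv f x (-u) (-Lu) := by
  rw [hasPosDirDeriv_iff]
  by_contra! ⟨ε, hε, hfar⟩
  obtain ⟨ε', hε'0, hε'⟩ := exists_rat_btwn (show 0 < ε / 3 by positivity)
  obtain ⟨ρ₁, hρ₁, hcone⟩ := hH (ε' / 2) (by positivity)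
  obtain ⟨δ, hδ, hconeu⟩ := exists_rat_forall_Ioo_of_eventually (hcone u Lu hu)
  obtain ⟨ρ, hρ0, hρ, hcρ⟩ := exists_rat_pos_le_mul_le hc hε'0 (show 0 < ρ₁ / 3 by positivity)
  obtain ⟨v', hv'D, hv'⟩ := hD.exists_dist_lt u hρ0
  obtain ⟨L', hL'E, hL'⟩ := Metric.mem_closure_iff.1 (hE u Lu hu) (ε' / 2) (by positivity)
  rw [dist_eq_norm Lu] at hL'
  refine hx ⟨_, Or.inr ⟨c, δ₀, ε', ρ, δ, v', hv'D, L', hL'E, ⟨hc, hδ₀, hρ0, hδ, hcρ⟩, Or.inr rfl⟩,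
    hLip, ?_, u, hv'.le, ?_⟩
  · rw [dist_eq_norm] at hv'
    exact ConeApprox.perturb (ρ := ρ₁) (ε := ε' / 2) hconeu
      (by rw [norm_sub_rev]; linarith) (by linarith)
  · refine (hfar.and_eventually self_mem_nhdsWithin).mono fun t ⟨hft, ht⟩ => ?_
    have ht : (0:ℝ) < t := ht
    have := norm_sub_smul_le_add ht.le (f (x + t • -u) - f x) (-L') (-Lu)
    rw [neg_sub_neg] at this
    nlinarith

end GoodPoints

section Linearity
variable {X Y : Type*} [NormedAddCommGroup X] [NormedSpace ℝ X]
  [NormedAddCommGroup Y] [NormedSpace ℝ Y] {f : X → Y} {x : X}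

lemma exists_linearMap_hasPosDirDeriv
    (hadd : ∀ {u v Lu Lv}, HasPosDirDeriv f x u Lu → HasPosDirDeriv f x v Lv →
      HasPosDirDeriv f x (u + v) (Lu + Lv))
    (hneg : ∀ {u L}, HasPosDirDeriv f x u L → HasPosDirDeriv f x (-u) (-L)) :
    ∃ U : Submodule ℝ X, (U : Set X) = {u | ∃ L, HasPosDirDeriv f x u L} ∧
      ∃ T : U →ₗ[ℝ] Y, ∀ u : U, HasPosDirDeriv f x u (T u) := by
  let graph : Submodule ℝ (X × Y) :=
    { carrier := {p | HasPosDirDeriv f x p.1 p.2}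
      add_mem' := hadd
      zero_mem' := hasPosDirDeriv_zero
      smul_mem' := fun r p hp => by
        rcases lt_trichotomy r 0 with hr | rfl | hr
        · simpa using (hneg hp).smul_of_pos (neg_pos.2 hr)
        · simpa using hasPosDirDeriv_zero
        · exact hp.smul_of_pos hr }
  have hfun : ∀ p ∈ graph, p.1 = 0 → p.2 = 0 := fun p hp h0 =>
    (h0 ▸ hp : HasPosDirDeriv f x 0 p.2).unique hasPosDirDeriv_zero
  refine ⟨graph.toLinearPMap.domain, ?_, graph.toLinearPMap.toFun,
    graph.mem_graph_toLinearPMap hfun⟩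
  ext u
  simp [Submodule.toLinearPMap_domain, graph]

lemma isClosed_setOf_hasPosDirDeriv [CompleteSpace Y] {c δ₀ : ℝ} (hH : UniformlyHadamardAt f x)
    (hLip : LipschitzAtWith f x c δ₀) (hc : 0 ≤ c) (hδ₀ : 0 < δ₀)
    (hadd : ∀ {u v Lu Lv}, HasPosDirDeriv f x u Lu → HasPosDirDeriv f x v Lv →
      HasPosDirDeriv f x (u + v) (Lu + Lv))
    (hneg : ∀ {u L}, HasPosDirDeriv f x u L → HasPosDirDeriv f x (-u) (-L)) :
    IsClosed {u | ∃ L, HasPosDirDeriv f x u L} := by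
  refine isClosed_of_closure_subset fun a ha => ?_
  obtain ⟨w, hw, hwa⟩ := mem_closure_iff_seq_limit.1 ha
  choose L hL using hw
  have hdist : ∀ m n, dist (L m) (L n) ≤ c * dist (w m) (w n) := fun m n => by
    simpa [dist_eq_norm, sub_eq_add_neg] using (hadd (hL m) (hneg (hL n))).norm_le hLip hδ₀
  obtain ⟨b, -, hb, hblim⟩ := cauchySeq_iff_le_tendsto_0.1 hwa.cauchySeq
  obtain ⟨La, hLa⟩ := cauchySeq_tendsto_of_complete <|
    cauchySeq_of_le_tendsto_0 (fun N => c * b N)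
      (fun m n N hm hn => (hdist m n).trans (mul_le_mul_of_nonneg_left (hb m n N hm hn) hc))
      (by simpa using hblim.const_mul c)
  refine ⟨La, hasPosDirDeriv_iff.2 fun ε hε => ?_⟩
  obtain ⟨ρ, hρ, hcone⟩ := hH (ε / 2) (half_pos hε)
  obtain ⟨n, hwn, hLn⟩ := ((hwa.eventually (closedBall_mem_nhds a hρ)).and
    (hLa.eventually (closedBall_mem_nhds La (half_pos hε)))).exists
  rw [dist_eq_norm] at hLn
  filter_upwards [hcone _ _ (hL n), self_mem_nhdsWithin] with t ht (ht0 : 0 < t)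
  calc _ ≤ ‖f (x + t • a) - f x - t • L n‖ + t * ‖L n - La‖ := norm_sub_smul_le_add ht0.le _ _ _
    _ ≤ ε / 2 * t + t * (ε / 2) := by grw [ht a (mem_closedBall_comm.1 hwn), hLn]
    _ = ε * t := by ring

end Linearity

theorem stmt15_general {X Y : Type*} [NormedAddCommGroup X] [NormedSpace ℝ X]
    [TopologicalSpace.SeparableSpace X]
    [NormedAddCommGroup Y] [NormedSpace ℝ Y] [CompleteSpace Y]
    (G : Set X) (hG : IsOpen G) (f : X → Y)
    (hf : ∀ x ∈ G, LipschitzAtPt f x) :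
    ∃ A : Set X, SigmaDirectionallyPorous A ∧ A ⊆ G ∧
      ∀ x ∈ G \ A,
        ∃ U : Submodule ℝ X, (U : Set X) = {u : X | ∃ L, HasPosDirDeriv f x u L} ∧
          IsClosed (U : Set X) ∧
          ∃ T : U →ₗ[ℝ] Y, ∀ u : U, HasPosDirDeriv f x (u : X) (T u) := by
  obtain ⟨dX, hdX⟩ := TopologicalSpace.exists_dense_seq X
  let E := range fun p : ℚ × ℕ × ℕ => (p.1 : ℝ) • (f (dX p.2.1) - f (dX p.2.2))
  refine ⟨G ∩ ⋃₀ badSets f (range dX) E,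
    .of_subset_sUnion (countable_badSets (countable_range _) (countable_range _))
      (fun _ => DirectionallyPorous.of_mem_badSets) inter_subset_right,
    inter_subset_left, fun x ⟨hxG, hxA⟩ => ?_⟩
  have hx : x ∉ ⋃₀ badSets f (range dX) E := fun h => hxA ⟨hxG, h⟩
  obtain ⟨c, δ₀, hc, hδ₀, hLip⟩ := (hf x hxG).exists_rat
  have hE : ∀ v L, HasPosDirDeriv f x v L → L ∈ closure E := fun _ _ h =>
    h.mem_closure_range hG hxG (fun z hz => (hf z hz).continuousAt) hdX
  have hH := uniformlyHadamardAt_of_notMem_badSets hLip hc hδ₀ hx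
  have hadd : ∀ {u v Lu Lv}, HasPosDirDeriv f x u Lu → HasPosDirDeriv f x v Lv →
      HasPosDirDeriv f x (u + v) (Lu + Lv) := fun hu hv =>
    hu.add_of_notMem_badSets hdX hE hH hLip hc hδ₀ hx hv
  have hneg : ∀ {u L}, HasPosDirDeriv f x u L → HasPosDirDeriv f x (-u) (-L) := fun hu =>
    hu.neg_of_notMem_badSets hdX hE hH hLip hc hδ₀ hx
  obtain ⟨U, hU, T, hT⟩ := exists_linearMap_hasPosDirDeriv hadd hneg
  exact ⟨U, hU, hU ▸ isClosed_setOf_hasPosDirDeriv hH hLip hc hδ₀ hadd hneg, T, hT⟩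

theorem stmt15 {X Y : Type*} [NormedAddCommGroup X] [NormedSpace ℝ X] [CompleteSpace X]
    [TopologicalSpace.SeparableSpace X]
    [NormedAddCommGroup Y] [NormedSpace ℝ Y] [CompleteSpace Y]
    (G : Set X) (hG : IsOpen G) (f : X → Y)
    (hf : ∀ x ∈ G, LipschitzAtPt f x) :
    ∃ A : Set X, SigmaDirectionallyPorous A ∧ A ⊆ G ∧
      ∀ x ∈ G \ A,
        ∃ U : Submodule ℝ X, (U : Set X) = {u : X | ∃ L, HasPosDirDeriv f x u L} ∧
          IsClosed (U : Set X) ∧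
          ∃ T : U →ₗ[ℝ] Y, ∀ u : U, HasPosDirDeriv f x (u : X) (T u) :=
  stmt15_general G hG f hf
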